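/- Let A = (a_x)_{x∈X} be a finite-outcome measurement on a state space S. If A is α-intersubjective, then A is ((1+α)/2)-sharp: for all x₁ ≠ x₂ in X and every effect c with c ≤ a_{x₁} and c ≤ a_{x₂}, one has c ≤ ((1−α)/2)·1_S. -/
import Mathlib


open Finset

/-- An effect on the state space `S`: an affine map taking values in `[0,1]` on `S`. -/
def IsEffect {V : Type*} [AddCommGroup V] [Module ℝ V] (S : Set V) (a : V →ᵃ[ℝ] ℝ) : Prop :=
  ∀ s ∈ S, 0 ≤ a s ∧ a s ≤ 1

/-- A finite-outcome measurement: a family of effects summing to the unit effect on `S`. -/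
def IsMeasurement {V : Type*} [AddCommGroup V] [Module ℝ V] (S : Set V) {X : Type*} [Fintype X]
    (A : X → (V →ᵃ[ℝ] ℝ)) : Prop :=
  (∀ x, IsEffect S (A x)) ∧ ∀ s ∈ S, ∑ x, A x s = 1

/-- A joint measurement of `A` and `B`: a measurement on `X × Y` whose marginals are `A`, `B`. -/
def IsJointMeasurement {V : Type*} [AddCommGroup V] [Module ℝ V] (S : Set V)
    {X Y : Type*} [Fintype X] [Fintype Y]
    (A : X → (V →ᵃ[ℝ] ℝ)) (B : Y → (V →ᵃ[ℝ] ℝ)) (C : X × Y → (V →ᵃ[ℝ] ℝ)) : Prop :=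
  IsMeasurement S C ∧ (∀ x, ∀ s ∈ S, ∑ y, C (x, y) s = A x s) ∧
    (∀ y, ∀ s ∈ S, ∑ x, C (x, y) s = B y s)

/-- `A` is `α`-intersubjective: every joint measurement of `A` with itself has diagonal
weight at least `α · 1_S`. -/
def Intersubjective {V : Type*} [AddCommGroup V] [Module ℝ V] (S : Set V) {X : Type*} [Fintype X]
    (α : ℝ) (A : X → (V →ᵃ[ℝ] ℝ)) : Prop :=
  ∀ C : X × X → (V →ᵃ[ℝ] ℝ), IsJointMeasurement S A A C → ∀ s ∈ S, α ≤ ∑ x, C (x, x) s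

/-- `A` is `α`-sharp: for distinct outcomes `x ≠ x'`, any effect below both `A x` and `A x'`
is below `(1 - α) · 1_S`. -/
def SharpMeasurement {V : Type*} [AddCommGroup V] [Module ℝ V] (S : Set V) {X : Type*} [Fintype X]
    (α : ℝ) (A : X → (V →ᵃ[ℝ] ℝ)) : Prop :=
  ∀ x x', x ≠ x' → ∀ b : V →ᵃ[ℝ] ℝ, IsEffect S b → (∀ s ∈ S, b s ≤ A x s) →
    (∀ s ∈ S, b s ≤ A x' s) → ∀ s ∈ S, b s ≤ 1 - α


set_option maxHeartbeats 1000000 in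
/-- an `α`-intersubjective measurement is `((1+α)/2)`-sharp. -/
theorem intersubjective_implies_sharp {V : Type*} [NormedAddCommGroup V] [NormedSpace ℝ V]
    (S : Set V) (hSconv : Convex ℝ S) (hScomp : IsCompact S)
    {X : Type*} [Fintype X] (A : X → (V →ᵃ[ℝ] ℝ)) (hA : IsMeasurement S A) (α : ℝ)
    (hIS : Intersubjective S α A) :
    SharpMeasurement S ((1 + α) / 2) A := by
  classical
  intro x₁ x₂ hne b hbeff hb1 hb2 s hs
  obtain ⟨C, hCval⟩ : ∃ C : X × X → (V →ᵃ[ℝ] ℝ), ∀ x y t, C (x, y) t =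
      (if (x = x₁ ∧ y = x₂) ∨ (x = x₂ ∧ y = x₁) then b t
       else if x = y then
         (if x = x₁ then A x₁ t - b t else if x = x₂ then A x₂ t - b t else A x t)
       else 0) := by
    refine ⟨fun p => if (p.1 = x₁ ∧ p.2 = x₂) ∨ (p.1 = x₂ ∧ p.2 = x₁) then b
      else if p.1 = p.2 then
        (if p.1 = x₁ then A x₁ - b else if p.1 = x₂ then A x₂ - b else A p.1)
      else 0, ?_⟩
    intro x y t
    simp only [apply_ite (fun f : V →ᵃ[ℝ] ℝ => f t), AffineMap.coe_sub, Pi.sub_apply,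
      AffineMap.coe_zero, Pi.zero_apply]
  -- row marginals
  have hrow : ∀ x, ∀ t ∈ S, ∑ y, C (x, y) t = A x t := by
    intro x t ht
    by_cases h1 : x = x₁
    · subst h1
      have hfun : (fun y => C (x, y) t) = fun y =>
          (if y = x₂ then b t else 0) + (if y = x then A x t - b t else 0) := by
        funext y
        rw [hCval]
        split_ifs <;> first | rfl | ring1 | tauto | (subst_vars; first | rfl | ring1 | tauto | simp_all)
      rw [hfun, Finset.sum_add_distrib, Finset.sum_ite_eq' Finset.univ x₂,
        Finset.sum_ite_eq' Finset.univ x]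
      simp
    · by_cases h2 : x = x₂
      · subst h2
        have hfun : (fun y => C (x, y) t) = fun y =>
            (if y = x₁ then b t else 0) + (if y = x then A x t - b t else 0) := by
          funext y
          rw [hCval]
          split_ifs <;> first | rfl | ring1 | tauto | (subst_vars; first | rfl | ring1 | tauto | simp_all)
        rw [hfun, Finset.sum_add_distrib, Finset.sum_ite_eq' Finset.univ x₁,
          Finset.sum_ite_eq' Finset.univ x]
        simp
      · have hfun : (fun y => C (x, y) t) = fun y => (if y = x then A x t else 0) := by
          funext y
          rw [hCval]
          split_ifs <;> first | rfl | tauto | (subst_vars; first | rfl | ring1 | tauto | simp_all)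
        rw [hfun, Finset.sum_ite_eq' Finset.univ x]
        simp
  have hsymv : ∀ x y t, C (x, y) t = C (y, x) t := by
    intro x y t
    rw [hCval, hCval]
    split_ifs <;> first | rfl | tauto | (subst_vars; first | rfl | ring1 | tauto | simp_all)
  have hcol : ∀ y, ∀ t ∈ S, ∑ x, C (x, y) t = A y t := by
    intro y t ht
    calc ∑ x, C (x, y) t = ∑ x, C (y, x) t :=
          Finset.sum_congr rfl fun x _ => hsymv x y t
      _ = A y t := hrow y t ht
  have heff : ∀ p, IsEffect S (C p) := by
    rintro ⟨x, y⟩ t ht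
    rw [hCval]
    split_ifs with h h2 h3 h4
    · exact hbeff t ht
    · constructor
      · linarith [hb1 t ht]
      · linarith [(hbeff t ht).1, ((hA.1 x₁) t ht).2]
    · constructor
      · linarith [hb2 t ht]
      · linarith [(hbeff t ht).1, ((hA.1 x₂) t ht).2]
    · exact (hA.1 x) t ht
    · norm_num
  have hjoint : IsJointMeasurement S A A C := by
    refine ⟨⟨heff, ?_⟩, hrow, hcol⟩
    intro t ht
    rw [Fintype.sum_prod_type]
    calc ∑ x, ∑ y, C (x, y) t = ∑ x, A x t :=
          Finset.sum_congr rfl fun x _ => hrow x t ht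
      _ = 1 := hA.2 t ht
  have hdiagfun : (fun x => C (x, x) s) = fun x =>
      A x s - ((if x = x₁ then b s else 0) + (if x = x₂ then b s else 0)) := by
    funext x
    rw [hCval]
    split_ifs <;> first | rfl | ring1 | tauto | (subst_vars; first | rfl | ring1 | tauto | simp_all)
  have hdiag : ∑ x, C (x, x) s = 1 - 2 * b s := by
    rw [hdiagfun, Finset.sum_sub_distrib, hA.2 s hs, Finset.sum_add_distrib,
      Finset.sum_ite_eq' Finset.univ x₁, Finset.sum_ite_eq' Finset.univ x₂]
    simp; ring
  have := hIS C hjoint s hs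
  rw [hdiag] at this
  linarith
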